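/- arXiv:2405.15510 — 2 statements merged into one kernel-verified Lean document; each statement's English description precedes it below -/
import Mathlib

section
/- Let L be an even lattice and G ≤ O^#(L) a finite subgroup of stable isometries, i.e., isometries acting trivially on the discriminant group D_L = L^∨/L. Then G is stably saturated (meaning G equals the subgroup of O^#(L) fixing the invariant sublattice L^G pointwise) if and only if the image of the restriction map G → O(L_G) equals O^#(L_G), where L_G = (L^G)^⊥ is the coinvariant sublattice. -/
section

variable {V : Type*} [AddCommGroup V] [Module ℚ V]

/-- The dual lattice `L^∨ ⊆ L ⊗ ℚ = V`, as a set. -/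
def dualSet (B : V →ₗ[ℚ] V →ₗ[ℚ] ℚ) (L : Submodule ℤ V) : Set V :=
  {x | ∀ l ∈ L, ∃ n : ℤ, B x l = (n : ℚ)}

/-- The invariant sublattice `L^G`, as a set. -/
def fixSet (L : Submodule ℤ V) (G : Subgroup (V ≃ₗ[ℚ] V)) : Set V :=
  {v | v ∈ L ∧ ∀ g ∈ G, (g : V ≃ₗ[ℚ] V) v = v}

/-- The coinvariant sublattice `L_G = (L^G)^⊥ ∩ L`, as a set. -/
def coSet (B : V →ₗ[ℚ] V →ₗ[ℚ] ℚ) (L : Submodule ℤ V)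
    (G : Subgroup (V ≃ₗ[ℚ] V)) : Set V :=
  {v | v ∈ L ∧ ∀ w ∈ fixSet L G, B v w = 0}

/-- The dual lattice of the coinvariant lattice `L_G`, inside its rational span. -/
def coDualSet (B : V →ₗ[ℚ] V →ₗ[ℚ] ℚ) (L : Submodule ℤ V)
    (G : Subgroup (V ≃ₗ[ℚ] V)) : Set V :=
  {x | x ∈ Submodule.span ℚ (coSet B L G) ∧ ∀ l ∈ coSet B L G, ∃ n : ℤ, B x l = (n : ℚ)}

end

/-!
Averaging over `G` is a projection `P` of `V = L ⊗ ℚ` onto the `G`-invariants which is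
self-adjoint for `B`; its kernel is the rational span of `L_G` and its image that of `L^G`. So `V`
splits orthogonally, `B` stays nondegenerate on `ker P`, and an isometry fixing `L^G` is
determined by its restriction to `L_G`. Since `L_G = L ∩ ker P` is primitive in `L`, every element
of `L_G^∨` has the form `y - P y` with `y ∈ L^∨`. This transports stability from `L` to `L_G` and
back, which makes the two descriptions of `G` equivalent.
-/

open Submodule

section Lattice

variable {V : Type*} [AddCommGroup V] [Module ℚ V]

lemma mem_span_of_forall_mem_inter {L : Submodule ℤ V} (hspan : span ℚ (L : Set V) = ⊤)
    {W : Submodule ℚ V} {S : Set V} (hS : ∀ u ∈ L, u ∈ W → u ∈ S) {v : V} (hv : v ∈ W) :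
    v ∈ span ℚ S := by
  obtain ⟨⟨n, hn⟩, hnv⟩ := multiple_mem_span_of_mem_localization_span (nonZeroDivisors ℤ) ℚ
    (L : Set V) v (hspan ▸ mem_top)
  rw [span_eq, Submonoid.mk_smul, ← Int.cast_smul_eq_zsmul ℚ] at hnv
  have hn0 : (n : ℚ) ≠ 0 := by exact_mod_cast nonZeroDivisors.ne_zero hn
  have hS' : (n : ℚ) • v ∈ span ℚ S := subset_span (hS _ hnv (W.smul_mem _ hv))
  simpa [hn0] using (span ℚ S).smul_mem (n : ℚ)⁻¹ hS'

lemma isTorsionFree_quotient_comap (L : Submodule ℤ V) (W : Submodule ℚ V) :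
    Module.IsTorsionFree ℤ (L ⧸ (W.restrictScalars ℤ).comap L.subtype) := by
  rw [Module.isTorsionFree_iff_smul_eq_zero]
  rintro n ⟨l⟩ h
  rw [Quotient.quot_mk_eq_mk, ← Quotient.mk_smul, Quotient.mk_eq_zero] at h
  rw [Quotient.quot_mk_eq_mk, Quotient.mk_eq_zero]
  have h' : (n : ℚ) • (l : V) ∈ W := by simpa [← Int.cast_smul_eq_zsmul ℚ] using h
  by_cases hn : n = 0
  · exact Or.inl hn
  · exact Or.inr ((W.smul_mem_iff (by exact_mod_cast hn)).mp h')

lemma Submodule.exists_retraction_of_projective_quotient {R M : Type*} [Ring R] [AddCommGroup M]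
    [Module R M] (K : Submodule R M) [Module.Projective R (M ⧸ K)] :
    ∃ r : M →ₗ[R] M, (∀ m, r m ∈ K) ∧ ∀ k ∈ K, r k = k := by
  obtain ⟨s, hs⟩ := K.mkQ.exists_rightInverse_of_surjective K.range_mkQ
  refine ⟨LinearMap.id - s ∘ₗ K.mkQ, fun m => ?_, fun k hk => ?_⟩
  · rw [← Quotient.mk_eq_zero]
    simpa using sub_eq_zero.mpr (LinearMap.congr_fun hs (K.mkQ m)).symm
  · simp [(Quotient.mk_eq_zero K).mpr hk]

lemma Submodule.IsLattice.exists_extend (L : Submodule ℤ V) [IsLattice ℚ L] (ψ : L →ₗ[ℤ] ℚ) :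
    ∃ Ψ : V →ₗ[ℚ] ℚ, ∀ l : L, Ψ l = ψ l := by
  let b := Module.Free.chooseBasis ℤ L
  let Ψ := (b.extendOfIsLattice ℚ).constr ℚ (ψ ∘ b)
  have hΨ : Ψ.restrictScalars ℤ ∘ₗ L.subtype = ψ := b.ext fun i => by
    simpa [Ψ] using (b.extendOfIsLattice ℚ).constr_basis ℚ (ψ ∘ b) i
  exact ⟨Ψ, LinearMap.congr_fun hΨ⟩

/-- `L ∩ W` is primitive in `L`, hence a direct summand, so functionals on it extend to `L`. -/
lemma exists_mem_dualSet_eq_on_inter (B : V →ₗ[ℚ] V →ₗ[ℚ] ℚ) (hB : B.SeparatingLeft)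
    (L : Submodule ℤ V) [IsLattice ℚ L] (W : Submodule ℚ V) {x : V}
    (hx : ∀ l ∈ L, l ∈ W → ∃ n : ℤ, B x l = n) :
    ∃ y ∈ dualSet B L, ∀ l ∈ L, l ∈ W → B y l = B x l := by
  have := isTorsionFree_quotient_comap L W
  obtain ⟨r, hrW, hr⟩ :=
    exists_retraction_of_projective_quotient ((W.restrictScalars ℤ).comap L.subtype)
  obtain ⟨Ψ, hΨ⟩ := IsLattice.exists_extend L ((B x).restrictScalars ℤ ∘ₗ L.subtype ∘ₗ r)
  have : FiniteDimensional ℚ V :=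
    Module.Finite.of_basis ((Module.Free.chooseBasis ℤ L).extendOfIsLattice ℚ)
  obtain ⟨y, rfl⟩ : ∃ y, B y = Ψ :=
    (LinearMap.injective_iff_surjective_of_finrank_eq_finrank Subspace.dual_finrank_eq.symm).mp
      (LinearMap.ker_eq_bot.mp (LinearMap.separatingLeft_iff_ker_eq_bot.mp hB)) Ψ
  refine ⟨y, fun l hl => ?_, fun l hl hlW => ?_⟩
  · rw [hΨ ⟨l, hl⟩]
    exact hx _ (r _).2 (hrW _)
  · rw [hΨ ⟨l, hl⟩]
    simp [hr ⟨l, hl⟩ hlW]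

end Lattice

section Average

variable {V : Type*} [AddCommGroup V] [Module ℚ V] (G : Subgroup (V ≃ₗ[ℚ] V)) [Fintype G]

noncomputable def Subgroup.averageMap : V →ₗ[ℚ] V :=
  (Representation.ofDistribMulAction ℚ G V).averageMap

namespace Subgroup

variable {G}

lemma averageMap_apply (v : V) :
    G.averageMap v = (Fintype.card G : ℚ)⁻¹ • ∑ g : G, (g : V ≃ₗ[ℚ] V) v := by
  simp [averageMap, GroupAlgebra.average, map_sum]
  rfl

lemma apply_averageMap {g : V ≃ₗ[ℚ] V} (hg : g ∈ G) (v : V) : g (G.averageMap v) = G.averageMap v :=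
  (Representation.ofDistribMulAction ℚ G V).averageMap_invariant v ⟨g, hg⟩

lemma averageMap_eq_self {v : V} (hv : ∀ g ∈ G, (g : V ≃ₗ[ℚ] V) v = v) : G.averageMap v = v :=
  (Representation.ofDistribMulAction ℚ G V).averageMap_id v fun g => hv g g.2

lemma averageMap_averageMap (v : V) : G.averageMap (G.averageMap v) = G.averageMap v :=
  averageMap_eq_self fun _ hg => apply_averageMap hg v

lemma isAdjointPair_averageMap {B : V →ₗ[ℚ] V →ₗ[ℚ] ℚ} (hG : ∀ g ∈ G, B.IsOrthogonal g) :
    B.IsAdjointPair B G.averageMap G.averageMap := fun x y => by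
  have hinv (g : G) : B ((g : V ≃ₗ[ℚ] V) x) y = B x (((g⁻¹ : G) : V ≃ₗ[ℚ] V) y) := by
    rw [← hG g g.2 x]
    simp
  simp only [averageMap_apply, map_smul, map_sum, LinearMap.smul_apply, LinearMap.sum_apply, hinv]
  congr 1
  exact Fintype.sum_equiv (Equiv.inv G) _ _ fun _ => rfl

end Subgroup

end Average

lemma LinearMap.IsOrthogonal.symm {R M : Type*} [CommRing R] [AddCommGroup M] [Module R M]
    {B : LinearMap.BilinForm R M} {f : M ≃ₗ[R] M} (hf : B.IsOrthogonal f) :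
    B.IsOrthogonal f.symm := fun x y => by
  rw [← hf, f.apply_symm_apply, f.apply_symm_apply]

section Coinvariant

variable {V : Type*} [AddCommGroup V] [Module ℚ V] {B : V →ₗ[ℚ] V →ₗ[ℚ] ℚ} {L : Submodule ℤ V}
  {G : Subgroup (V ≃ₗ[ℚ] V)}

open Subgroup

lemma bilin_eq_zero_of_mem_coSet {c w : V} (hc : c ∈ coSet B L G)
    (hw : w ∈ span ℚ (fixSet L G)) : B c w = 0 :=
  span_le (p := LinearMap.ker (B c)) |>.mpr hc.2 hw

variable [Fintype G]

lemma averageMap_mem_span_fixSet (hspan : span ℚ (L : Set V) = ⊤) (v : V) :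
    G.averageMap v ∈ span ℚ (fixSet L G) := by
  refine mem_span_of_forall_mem_inter hspan ?_ (LinearMap.mem_range_self _ v)
  rintro u hu ⟨w, rfl⟩
  exact ⟨hu, fun _ hg => apply_averageMap hg w⟩

lemma mem_coSet_iff (hG : ∀ g ∈ G, B.IsOrthogonal g) (hB : B.SeparatingLeft)
    (hspan : span ℚ (L : Set V) = ⊤) {c : V} : c ∈ coSet B L G ↔ c ∈ L ∧ G.averageMap c = 0 := by
  refine ⟨fun hc => ⟨hc.1, hB _ fun u => ?_⟩, fun ⟨hc, h0⟩ => ⟨hc, fun w hw => ?_⟩⟩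
  · rw [isAdjointPair_averageMap hG _ _]
    exact bilin_eq_zero_of_mem_coSet hc (averageMap_mem_span_fixSet hspan u)
  · rw [← averageMap_eq_self hw.2, ← isAdjointPair_averageMap hG _ _, h0, map_zero,
      LinearMap.zero_apply]

lemma span_coSet_eq_ker (hG : ∀ g ∈ G, B.IsOrthogonal g) (hB : B.SeparatingLeft)
    (hspan : span ℚ (L : Set V) = ⊤) : span ℚ (coSet B L G) = LinearMap.ker G.averageMap :=
  le_antisymm (span_le.mpr fun _ hc => ((mem_coSet_iff hG hB hspan).mp hc).2)
    fun _ hv => mem_span_of_forall_mem_inter hspan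
      (fun _ hu h0 => (mem_coSet_iff hG hB hspan).mpr ⟨hu, h0⟩) hv

lemma sub_averageMap_mem_span_coSet (hG : ∀ g ∈ G, B.IsOrthogonal g) (hB : B.SeparatingLeft)
    (hspan : span ℚ (L : Set V) = ⊤) (v : V) :
    v - G.averageMap v ∈ span ℚ (coSet B L G) := by
  simp [span_coSet_eq_ker hG hB hspan, averageMap_averageMap]

lemma bilin_averageMap_eq_zero_of_mem_coSet (hG : ∀ g ∈ G, B.IsOrthogonal g)
    (hB : B.SeparatingLeft) (hspan : span ℚ (L : Set V) = ⊤) (v : V) {c : V}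
    (hc : c ∈ coSet B L G) : B (G.averageMap v) c = 0 := by
  rw [isAdjointPair_averageMap hG _ _, ((mem_coSet_iff hG hB hspan).mp hc).2, map_zero]

lemma eq_zero_of_mem_span_coSet (hG : ∀ g ∈ G, B.IsOrthogonal g) (hB : B.SeparatingLeft)
    (hspan : span ℚ (L : Set V) = ⊤) {x : V} (hx : x ∈ span ℚ (coSet B L G))
    (hperp : ∀ c ∈ coSet B L G, B x c = 0) : x = 0 := by
  have hx0 : G.averageMap x = 0 := by rwa [span_coSet_eq_ker hG hB hspan] at hx
  refine hB x fun u => ?_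
  have h1 : B x (u - G.averageMap u) = 0 :=
    span_le (p := LinearMap.ker (B x)) |>.mpr hperp (sub_averageMap_mem_span_coSet hG hB hspan u)
  have h2 : B x (G.averageMap u) = 0 := by
    rw [← isAdjointPair_averageMap hG _ _, hx0, map_zero, LinearMap.zero_apply]
  simpa [h2] using h1

lemma averageMap_eq_self_of_orthogonal (hG : ∀ g ∈ G, B.IsOrthogonal g) (hB : B.SeparatingLeft)
    (hspan : span ℚ (L : Set V) = ⊤) {v : V} (hperp : ∀ c ∈ coSet B L G, B v c = 0) :
    G.averageMap v = v := by
  refine (sub_eq_zero.mp (eq_zero_of_mem_span_coSet hG hB hspan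
    (sub_averageMap_mem_span_coSet hG hB hspan v) fun c hc => ?_)).symm
  rw [map_sub, LinearMap.sub_apply, hperp c hc,
    bilin_averageMap_eq_zero_of_mem_coSet hG hB hspan v hc, sub_zero]

end Coinvariant

section Stable

variable {V : Type*} [AddCommGroup V] [Module ℚ V] {B : V →ₗ[ℚ] V →ₗ[ℚ] ℚ} {L : Submodule ℤ V}
  {G : Subgroup (V ≃ₗ[ℚ] V)}

open Subgroup

lemma map_mem_of_forall_mem_dualSet (hint : ∀ x ∈ L, ∀ y ∈ L, ∃ n : ℤ, B x y = n)
    {f : V →ₗ[ℚ] V} (hst : ∀ x ∈ dualSet B L, f x - x ∈ L) {x : V} (hx : x ∈ L) : f x ∈ L := by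
  simpa using L.add_mem hx (hst x (hint x hx))

lemma map_mem_coSet {f : V →ₗ[ℚ] V} (hf : B.IsOrthogonal f) (hfix : ∀ v ∈ fixSet L G, f v = v)
    (hfL : ∀ x ∈ L, f x ∈ L) {c : V} (hc : c ∈ coSet B L G) : f c ∈ coSet B L G :=
  ⟨hfL c hc.1, fun w hw => by rw [← hfix w hw, hf, hc.2 w hw]⟩

lemma stable_coSet_symm {φ : V ≃ₗ[ℚ] V} (hφ : B.IsOrthogonal φ)
    (hC : ∀ c ∈ coSet B L G, φ c ∈ coSet B L G) (hCsymm : ∀ c ∈ coSet B L G, φ.symm c ∈ coSet B L G)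
    (hst : ∀ x ∈ coDualSet B L G, φ x - x ∈ span ℤ (coSet B L G)) :
    ∀ x ∈ coDualSet B L G, φ.symm x - x ∈ span ℤ (coSet B L G) := by
  intro x hx
  have hmem : φ.symm x ∈ span ℚ (coSet B L G) :=
    span_le (p := (span ℚ (coSet B L G)).comap φ.symm.toLinearMap) |>.mpr
      (fun c hc => subset_span (hCsymm c hc)) hx.1
  have hdual : φ.symm x ∈ coDualSet B L G :=
    ⟨hmem, fun c hc => by simpa [← hφ (φ.symm x) c] using hx.2 (φ c) (hC c hc)⟩
  simpa using neg_mem (hst _ hdual)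

lemma apply_eq_self_of_mem_span_fixSet {f : V →ₗ[ℚ] V} (hfix : ∀ v ∈ fixSet L G, f v = v) {v : V}
    (hv : v ∈ span ℚ (fixSet L G)) : f v = v :=
  LinearMap.eqOn_span (g := LinearMap.id) hfix hv

variable [Fintype G]

lemma exists_mem_dualSet_sub_averageMap (hG : ∀ g ∈ G, B.IsOrthogonal g) (hB : B.SeparatingLeft)
    (hfg : L.FG) (hspan : span ℚ (L : Set V) = ⊤) {x : V} (hx : x ∈ coDualSet B L G) :
    ∃ y ∈ dualSet B L, y - G.averageMap y = x := by
  have : IsLattice ℚ L := ⟨hfg, hspan⟩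
  obtain ⟨y, hy, hyx⟩ := exists_mem_dualSet_eq_on_inter B hB L (LinearMap.ker G.averageMap)
    fun l hl h0 => hx.2 l ((mem_coSet_iff hG hB hspan).mpr ⟨hl, h0⟩)
  refine ⟨y, hy, (sub_eq_zero.mp (eq_zero_of_mem_span_coSet hG hB hspan
    (sub_mem (sub_averageMap_mem_span_coSet hG hB hspan y) hx.1) fun c hc => ?_))⟩
  have hc' := (mem_coSet_iff hG hB hspan).mp hc
  rw [map_sub, map_sub, LinearMap.sub_apply, LinearMap.sub_apply, hyx c hc'.1 hc'.2,
    bilin_averageMap_eq_zero_of_mem_coSet hG hB hspan y hc]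
  ring

lemma stable_coSet_of_stable (hG : ∀ g ∈ G, B.IsOrthogonal g) (hB : B.SeparatingLeft)
    (hfg : L.FG) (hspan : span ℚ (L : Set V) = ⊤) {f : V →ₗ[ℚ] V} (hf : B.IsOrthogonal f)
    (hfix : ∀ v ∈ fixSet L G, f v = v) (hst : ∀ x ∈ dualSet B L, f x - x ∈ L) :
    ∀ x ∈ coDualSet B L G, f x - x ∈ span ℤ (coSet B L G) := by
  intro x hx
  obtain ⟨y, hy, rfl⟩ := exists_mem_dualSet_sub_averageMap hG hB hfg hspan hx
  have hco : f y - y ∈ coSet B L G := ⟨hst y hy, fun w hw => by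
    rw [map_sub, LinearMap.sub_apply, ← hfix w hw, hf, hfix w hw, sub_self]⟩
  rw [map_sub, apply_eq_self_of_mem_span_fixSet hfix (averageMap_mem_span_fixSet hspan y),
    sub_sub_sub_cancel_right]
  exact subset_span hco

lemma stable_of_stable_coSet (hG : ∀ g ∈ G, B.IsOrthogonal g) (hB : B.SeparatingLeft)
    (hspan : span ℚ (L : Set V) = ⊤) {φ : V →ₗ[ℚ] V}
    (hfix : ∀ v, (∀ c ∈ coSet B L G, B v c = 0) → φ v = v)
    (hst : ∀ x ∈ coDualSet B L G, φ x - x ∈ span ℤ (coSet B L G)) :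
    ∀ x ∈ dualSet B L, φ x - x ∈ L := by
  intro x hx
  have hPx : φ (G.averageMap x) = G.averageMap x :=
    hfix _ fun c hc => bilin_averageMap_eq_zero_of_mem_coSet hG hB hspan x hc
  have hdual : x - G.averageMap x ∈ coDualSet B L G := by
    refine ⟨sub_averageMap_mem_span_coSet hG hB hspan x, fun c hc => ?_⟩
    obtain ⟨n, hn⟩ := hx c hc.1
    refine ⟨n, ?_⟩
    rw [map_sub, LinearMap.sub_apply, bilin_averageMap_eq_zero_of_mem_coSet hG hB hspan x hc,
      sub_zero, hn]
  have := span_le (p := L) |>.mpr (fun c hc => hc.1) (hst _ hdual)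
  rwa [map_sub, hPx, sub_sub_sub_cancel_right] at this

lemma apply_eq_self_of_orthogonal_coSet (hG : ∀ g ∈ G, B.IsOrthogonal g) (hB : B.SeparatingLeft)
    (hspan : span ℚ (L : Set V) = ⊤) {f : V →ₗ[ℚ] V} (hfix : ∀ v ∈ fixSet L G, f v = v) {v : V}
    (hperp : ∀ c ∈ coSet B L G, B v c = 0) : f v = v := by
  rw [← averageMap_eq_self_of_orthogonal hG hB hspan hperp]
  exact apply_eq_self_of_mem_span_fixSet hfix (averageMap_mem_span_fixSet hspan v)

lemma eq_of_eqOn_coSet (hG : ∀ g ∈ G, B.IsOrthogonal g) (hB : B.SeparatingLeft)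
    (hspan : span ℚ (L : Set V) = ⊤) {f g : V →ₗ[ℚ] V} (hf : ∀ v ∈ fixSet L G, f v = v)
    (hg : ∀ v ∈ fixSet L G, g v = v) (hfg : ∀ c ∈ coSet B L G, f c = g c) : f = g := by
  ext v
  have hfix := averageMap_mem_span_fixSet (G := G) hspan v
  rw [← sub_add_cancel v (G.averageMap v), map_add, map_add,
    LinearMap.eqOn_span hfg (sub_averageMap_mem_span_coSet hG hB hspan v),
    apply_eq_self_of_mem_span_fixSet hf hfix, apply_eq_self_of_mem_span_fixSet hg hfix]

end Stable

theorem stmt_5_general {V : Type*} [AddCommGroup V] [Module ℚ V]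
    (B : V →ₗ[ℚ] V →ₗ[ℚ] ℚ)
    (hnondeg : ∀ x, (∀ y, B x y = 0) → x = 0)
    (L : Submodule ℤ V) (hfg : L.FG)
    (hspan : Submodule.span ℚ (L : Set V) = ⊤)
    (hint : ∀ x ∈ L, ∀ y ∈ L, ∃ n : ℤ, B x y = (n : ℚ))
    (G : Subgroup (V ≃ₗ[ℚ] V)) (hGfin : Finite G)
    (hGisom : ∀ g ∈ G, ∀ x y, B ((g : V ≃ₗ[ℚ] V) x) ((g : V ≃ₗ[ℚ] V) y) = B x y)
    (hGstable : ∀ g ∈ G, ∀ x ∈ dualSet B L, (g : V ≃ₗ[ℚ] V) x - x ∈ L) :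
    -- `G` is stably saturated, i.e. every stable isometry of `L` fixing `L^G`
    -- pointwise lies in `G` ...
    (∀ f : V ≃ₗ[ℚ] V,
        (∀ x y, B (f x) (f y) = B x y) →
        (∀ x ∈ L, f x ∈ L) → (∀ x ∈ L, f.symm x ∈ L) →
        (∀ x ∈ dualSet B L, f x - x ∈ L) →
        (∀ v ∈ fixSet L G, f v = v) → f ∈ G) ↔
    -- ... iff the image of `G → O(L_G)` equals `O^#(L_G)`:
    ((∀ g ∈ G, ∀ x ∈ coDualSet B L G,
        (g : V ≃ₗ[ℚ] V) x - x ∈ Submodule.span ℤ (coSet B L G)) ∧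
      (∀ φ : V ≃ₗ[ℚ] V,
        (∀ x y, B (φ x) (φ y) = B x y) →
        (∀ v, (∀ l ∈ coSet B L G, B v l = 0) → φ v = v) →
        (∀ x ∈ coSet B L G, φ x ∈ coSet B L G) →
        (∀ x ∈ coSet B L G, φ.symm x ∈ coSet B L G) →
        (∀ x ∈ coDualSet B L G, φ x - x ∈ Submodule.span ℤ (coSet B L G)) →
        ∃ g ∈ G, ∀ v ∈ coSet B L G, (g : V ≃ₗ[ℚ] V) v = φ v)) := by
  have := Fintype.ofFinite G
  constructor
  · intro hsat
    refine ⟨fun g hg => stable_coSet_of_stable hGisom hnondeg hfg hspan (hGisom g hg)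
      (fun v hv => hv.2 g hg) (hGstable g hg), fun φ hφ hfix hC hCsymm hst => ?_⟩
    have hfix' (v : V) (hv : ∀ c ∈ coSet B L G, B v c = 0) : φ.symm v = v :=
      φ.symm_apply_eq.mpr (hfix v hv).symm
    have hstL := stable_of_stable_coSet hGisom hnondeg hspan hfix hst
    have hstL' := stable_of_stable_coSet hGisom hnondeg hspan hfix'
      (stable_coSet_symm hφ hC hCsymm hst)
    refine ⟨φ, hsat φ hφ (fun _ => map_mem_of_forall_mem_dualSet hint hstL)
      (fun _ => map_mem_of_forall_mem_dualSet hint hstL') hstL fun w hw => hfix w fun c hc => ?_,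
      fun _ _ => rfl⟩
    rw [← Subgroup.averageMap_eq_self hw.2]
    exact bilin_averageMap_eq_zero_of_mem_coSet hGisom hnondeg hspan w hc
  · rintro ⟨-, hsurj⟩ f hf hfL hfLsymm hst hfix
    have hfix' (v : V) (hv : v ∈ fixSet L G) : f.symm v = v := f.symm_apply_eq.mpr (hfix v hv).symm
    obtain ⟨g, hg, hgf⟩ := hsurj f hf
      (fun _ => apply_eq_self_of_orthogonal_coSet hGisom hnondeg hspan hfix)
      (fun _ => map_mem_coSet hf hfix hfL)
      (fun _ => map_mem_coSet (LinearMap.IsOrthogonal.symm hf) hfix' hfLsymm)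
      (stable_coSet_of_stable hGisom hnondeg hfg hspan hf hfix hst)
    rwa [LinearEquiv.toLinearMap_injective (eq_of_eqOn_coSet hGisom hnondeg hspan hfix
      (fun v hv => hv.2 g hg) fun c hc => (hgf c hc).symm)]

/-- for an even lattice `L` and a finite subgroup `G ≤ O^#(L)` of stable
isometries, `G` is stably saturated (it equals the pointwise stabilizer of `L^G` in
`O^#(L)`) iff the image of the restriction map `G → O(L_G)` is `O^#(L_G)`. -/
theorem stmt_5 {V : Type*} [AddCommGroup V] [Module ℚ V]
    (B : V →ₗ[ℚ] V →ₗ[ℚ] ℚ)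
    (hsymm : ∀ x y, B x y = B y x)
    (hnondeg : ∀ x, (∀ y, B x y = 0) → x = 0)
    (L : Submodule ℤ V) (hfg : L.FG)
    (hspan : Submodule.span ℚ (L : Set V) = ⊤)
    (hint : ∀ x ∈ L, ∀ y ∈ L, ∃ n : ℤ, B x y = (n : ℚ))
    (heven : ∀ x ∈ L, ∃ k : ℤ, B x x = 2 * (k : ℚ))
    (G : Subgroup (V ≃ₗ[ℚ] V)) (hGfin : Finite G)
    (hGisom : ∀ g ∈ G, ∀ x y, B ((g : V ≃ₗ[ℚ] V) x) ((g : V ≃ₗ[ℚ] V) y) = B x y)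
    (hGL : ∀ g ∈ G, ∀ x ∈ L, (g : V ≃ₗ[ℚ] V) x ∈ L)
    (hGstable : ∀ g ∈ G, ∀ x ∈ dualSet B L, (g : V ≃ₗ[ℚ] V) x - x ∈ L) :
    -- `G` is stably saturated, i.e. every stable isometry of `L` fixing `L^G`
    -- pointwise lies in `G` ...
    (∀ f : V ≃ₗ[ℚ] V,
        (∀ x y, B (f x) (f y) = B x y) →
        (∀ x ∈ L, f x ∈ L) → (∀ x ∈ L, f.symm x ∈ L) →
        (∀ x ∈ dualSet B L, f x - x ∈ L) →
        (∀ v ∈ fixSet L G, f v = v) → f ∈ G) ↔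
    -- ... iff the image of `G → O(L_G)` equals `O^#(L_G)`:
    ((∀ g ∈ G, ∀ x ∈ coDualSet B L G,
        (g : V ≃ₗ[ℚ] V) x - x ∈ Submodule.span ℤ (coSet B L G)) ∧
      (∀ φ : V ≃ₗ[ℚ] V,
        (∀ x y, B (φ x) (φ y) = B x y) →
        (∀ v, (∀ l ∈ coSet B L G, B v l = 0) → φ v = v) →
        (∀ x ∈ coSet B L G, φ x ∈ coSet B L G) →
        (∀ x ∈ coSet B L G, φ.symm x ∈ coSet B L G) →
        (∀ x ∈ coDualSet B L G, φ x - x ∈ Submodule.span ℤ (coSet B L G)) →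
        ∃ g ∈ G, ∀ v ∈ coSet B L G, (g : V ≃ₗ[ℚ] V) v = φ v)) :=
  stmt_5_general B hnondeg L hfg hspan hint G hGfin hGisom hGstable
end

section
/- Let L be an even unimodular lattice and G ≤ O(L) a finite subgroup. Then any isometry of L that fixes the invariant sublattice L^G pointwise restricts to an isometry of the coinvariant sublattice L_G acting trivially on the discriminant group D_{L_G}; conversely every element of O^#(L_G) extends (by the identity on L^G) to an isometry of L. In particular, G is saturated in O(L) if and only if the restriction G → O^#(L_G) is surjective. -/
/-- for an even unimodular lattice `L` and a finite subgroup `G ≤ O(L)`: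
every isometry of `L` fixing `L^G` pointwise restricts to an isometry of `L_G` acting
trivially on `D_{L_G}`; conversely every element of `O^#(L_G)` extends by the identity
on `L^G` to an isometry of `L`; and `G` is saturated in `O(L)` iff the restriction
`G → O^#(L_G)` is surjective. -/
theorem stmt_6 {V : Type*} [AddCommGroup V] [Module ℚ V]
    (B : V →ₗ[ℚ] V →ₗ[ℚ] ℚ)
    (hsymm : ∀ x y, B x y = B y x)
    (hnondeg : ∀ x, (∀ y, B x y = 0) → x = 0)
    (L : Submodule ℤ V) (hfg : L.FG)
    (hspan : Submodule.span ℚ (L : Set V) = ⊤)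
    (hint : ∀ x ∈ L, ∀ y ∈ L, ∃ n : ℤ, B x y = (n : ℚ))
    (heven : ∀ x ∈ L, ∃ k : ℤ, B x x = 2 * (k : ℚ))
    (huni : ∀ x ∈ dualSet B L, x ∈ L)
    (G : Subgroup (V ≃ₗ[ℚ] V)) (hGfin : Finite G)
    (hGisom : ∀ g ∈ G, ∀ x y, B ((g : V ≃ₗ[ℚ] V) x) ((g : V ≃ₗ[ℚ] V) y) = B x y)
    (hGL : ∀ g ∈ G, ∀ x ∈ L, (g : V ≃ₗ[ℚ] V) x ∈ L) :
    -- (i) restriction of `L^G`-fixing isometries is stable on `L_G`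
    (∀ f : V ≃ₗ[ℚ] V,
        (∀ x y, B (f x) (f y) = B x y) →
        (∀ x ∈ L, f x ∈ L) → (∀ x ∈ L, f.symm x ∈ L) →
        (∀ v ∈ fixSet L G, f v = v) →
        (∀ x ∈ coSet B L G, f x ∈ coSet B L G) ∧
          (∀ x ∈ coDualSet B L G, f x - x ∈ Submodule.span ℤ (coSet B L G))) ∧
    -- (ii) every element of `O^#(L_G)` extends by the identity on `(L_G)^⊥`
    (∀ φ : V ≃ₗ[ℚ] V,
        (∀ x y, B (φ x) (φ y) = B x y) →
        (∀ v, (∀ l ∈ coSet B L G, B v l = 0) → φ v = v) →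
        (∀ x ∈ coSet B L G, φ x ∈ coSet B L G) →
        (∀ x ∈ coSet B L G, φ.symm x ∈ coSet B L G) →
        (∀ x ∈ coDualSet B L G, φ x - x ∈ Submodule.span ℤ (coSet B L G)) →
        ∃ f : V ≃ₗ[ℚ] V, (∀ x y, B (f x) (f y) = B x y) ∧
          (∀ x ∈ L, f x ∈ L) ∧ (∀ x ∈ L, f.symm x ∈ L) ∧
          (∀ v ∈ fixSet L G, f v = v) ∧ (∀ v ∈ coSet B L G, f v = φ v)) ∧
    -- (iii) `G` saturated in `O(L)` iff `G → O^#(L_G)` is surjective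
    ((∀ f : V ≃ₗ[ℚ] V,
        (∀ x y, B (f x) (f y) = B x y) →
        (∀ x ∈ L, f x ∈ L) → (∀ x ∈ L, f.symm x ∈ L) →
        (∀ v ∈ fixSet L G, f v = v) → f ∈ G) ↔
      (∀ φ : V ≃ₗ[ℚ] V,
        (∀ x y, B (φ x) (φ y) = B x y) →
        (∀ v, (∀ l ∈ coSet B L G, B v l = 0) → φ v = v) →
        (∀ x ∈ coSet B L G, φ x ∈ coSet B L G) →
        (∀ x ∈ coSet B L G, φ.symm x ∈ coSet B L G) →
        (∀ x ∈ coDualSet B L G, φ x - x ∈ Submodule.span ℤ (coSet B L G)) →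
        ∃ g ∈ G, ∀ v ∈ coSet B L G, (g : V ≃ₗ[ℚ] V) v = φ v)) := by
  
  classical
  haveI : Fintype G := Fintype.ofFinite G
  -- clearing denominators
  have denom : ∀ v : V, ∃ n : ℤ, n ≠ 0 ∧ ((n : ℚ)) • v ∈ L := by
    intro v
    have hv : v ∈ Submodule.span ℚ (L : Set V) := by rw [hspan]; trivial
    refine Submodule.span_induction ?_ ?_ ?_ ?_ hv
    · intro x hx; exact ⟨1, one_ne_zero, by simpa using hx⟩
    · exact ⟨1, one_ne_zero, by simp⟩
    · rintro x y _ _ ⟨n, hn, hx⟩ ⟨m, hm, hy⟩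
      refine ⟨n * m, mul_ne_zero hn hm, ?_⟩
      have heq : ((n * m : ℤ) : ℚ) • (x + y)
          = ((m : ℚ)) • ((n : ℚ) • x) + ((n : ℚ)) • ((m : ℚ) • y) := by
        rw [smul_add, smul_smul, smul_smul]
        congr 1 <;> · congr 1; push_cast; ring
      rw [heq]
      refine L.add_mem ?_ ?_
      · rw [show ((m : ℚ)) = ((m : ℤ) : ℚ) by norm_cast, Int.cast_smul_eq_zsmul ℚ]
        exact L.smul_mem _ hx
      · rw [show ((n : ℚ)) = ((n : ℤ) : ℚ) by norm_cast, Int.cast_smul_eq_zsmul ℚ]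
        exact L.smul_mem _ hy
    · rintro a x _ ⟨n, hn, hx⟩
      refine ⟨(a.den : ℤ) * n, mul_ne_zero (Int.natCast_ne_zero.mpr a.den_nz) hn, ?_⟩
      have hd : ((a.den : ℚ)) ≠ 0 := Nat.cast_ne_zero.mpr a.den_nz
      have hden : (a.num : ℚ) = a * a.den := (div_eq_iff hd).mp (Rat.num_div_den a)
      have heq : (((a.den : ℤ) * n : ℤ) : ℚ) • (a • x) = ((a.num : ℚ)) • ((n : ℚ) • x) := by
        rw [smul_smul, smul_smul]
        congr 1
        push_cast
        rw [hden]; ring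
      rw [heq, Int.cast_smul_eq_zsmul ℚ]
      exact L.smul_mem _ hx
  -- the averaging projection onto the fixed space
  have hc : ((Fintype.card G : ℚ)) ≠ 0 := Nat.cast_ne_zero.mpr Fintype.card_ne_zero
  set p : V → V := fun v => (Fintype.card G : ℚ)⁻¹ • ∑ g : G, (g : V ≃ₗ[ℚ] V) v with hp
  have pFix : ∀ v : V, ∀ h ∈ G, (h : V ≃ₗ[ℚ] V) (p v) = p v := by
    intro v h hh
    have h1 : (h : V ≃ₗ[ℚ] V) (p v)
        = (Fintype.card G : ℚ)⁻¹ • ∑ g : G, (((⟨h, hh⟩ : G) * g : G) : V ≃ₗ[ℚ] V) v := by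
      simp only [hp, map_smul, map_sum]; rfl
    rw [h1, Fintype.sum_bijective (fun g => (⟨h, hh⟩ : G) * g)
      (Group.mulLeft_bijective _) _ (fun g : G => (g : V ≃ₗ[ℚ] V) v) (fun g => rfl)]
  have pfixed : ∀ v : V, (∀ g ∈ G, (g : V ≃ₗ[ℚ] V) v = v) → p v = v := by
    intro v hv
    simp only [hp]
    have h1 : ∑ g : G, (g : V ≃ₗ[ℚ] V) v = ∑ _g : G, v :=
      Finset.sum_congr rfl (fun g _ => hv g g.2)
    rw [h1, Finset.sum_const, Finset.card_univ, ← Nat.cast_smul_eq_nsmul ℚ, smul_smul,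
      inv_mul_cancel₀ hc, one_smul]
  have pB : ∀ v w : V, (∀ g ∈ G, (g : V ≃ₗ[ℚ] V) w = w) → B (p v) w = B v w := by
    intro v w hw
    simp only [hp]
    simp only [map_smul, LinearMap.smul_apply, map_sum, LinearMap.sum_apply, smul_eq_mul]
    have h1 : ∑ g : G, B ((g : V ≃ₗ[ℚ] V) v) w = ∑ _g : G, B v w := by
      refine Finset.sum_congr rfl (fun g _ => ?_)
      calc B ((g : V ≃ₗ[ℚ] V) v) w = B ((g : V ≃ₗ[ℚ] V) v) ((g : V ≃ₗ[ℚ] V) w) := by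
            rw [hw g g.2]
        _ = B v w := hGisom g g.2 v w
    rw [h1, Finset.sum_const, Finset.card_univ, nsmul_eq_mul, ← mul_assoc,
      inv_mul_cancel₀ hc, one_mul]
  -- auxiliary facts
  have fixAll : ∀ f : V ≃ₗ[ℚ] V, (∀ v ∈ fixSet L G, f v = v) →
      ∀ v, (∀ g ∈ G, (g : V ≃ₗ[ℚ] V) v = v) → f v = v := by
    intro f hf v hv
    obtain ⟨n, hn, hnv⟩ := denom v
    have hmem : ((n : ℚ)) • v ∈ fixSet L G :=
      ⟨hnv, fun g hg => by rw [map_smul, hv g hg]⟩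
    have h1 := hf _ hmem
    rw [map_smul] at h1
    exact smul_right_injective V (Int.cast_ne_zero.mpr hn) h1
  have perpCF : ∀ l ∈ coSet B L G, ∀ v, (∀ g ∈ G, (g : V ≃ₗ[ℚ] V) v = v) → B l v = 0 := by
    intro l hl v hv
    obtain ⟨n, hn, hnv⟩ := denom v
    have hmem : ((n : ℚ)) • v ∈ fixSet L G :=
      ⟨hnv, fun g hg => by rw [map_smul, hv g hg]⟩
    have h1 := hl.2 _ hmem
    rw [map_smul, smul_eq_mul] at h1
    exact (mul_eq_zero.mp h1).resolve_left (Int.cast_ne_zero.mpr hn)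
  have spanker : ∀ u : V, (∀ l ∈ coSet B L G, B u l = 0) →
      ∀ z ∈ Submodule.span ℚ (coSet B L G), B u z = 0 := by
    intro u hu z hz
    have h1 : Submodule.span ℚ (coSet B L G) ≤ LinearMap.ker (B u) :=
      Submodule.span_le.mpr (fun l hl => LinearMap.mem_ker.mpr (hu l hl))
    exact LinearMap.mem_ker.mp (h1 hz)
  have spanperpFx : ∀ x ∈ Submodule.span ℚ (coSet B L G),
      ∀ v, (∀ g ∈ G, (g : V ≃ₗ[ℚ] V) v = v) → B x v = 0 := by
    intro x hx v hv
    rw [hsymm]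
    exact spanker v (fun l hl => by rw [hsymm]; exact perpCF l hl v hv) x hx
  have memspanC : ∀ v : V, (∀ w, (∀ g ∈ G, (g : V ≃ₗ[ℚ] V) w = w) → B v w = 0) →
      v ∈ Submodule.span ℚ (coSet B L G) := by
    intro v hv
    obtain ⟨n, hn, hnv⟩ := denom v
    have hmem : ((n : ℚ)) • v ∈ coSet B L G := by
      refine ⟨hnv, fun w hw => ?_⟩
      rw [map_smul, LinearMap.smul_apply, hv w hw.2, smul_zero]
    have h1 : v = ((n : ℚ))⁻¹ • (((n : ℚ)) • v) := by
      rw [smul_smul, inv_mul_cancel₀ (Int.cast_ne_zero.mpr hn), one_smul]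
    rw [h1]
    exact Submodule.smul_mem _ _ (Submodule.subset_span hmem)
  have qspan : ∀ v : V, v - p v ∈ Submodule.span ℚ (coSet B L G) := by
    intro v
    refine memspanC _ (fun w hw => ?_)
    rw [map_sub, LinearMap.sub_apply, pB v w hw, sub_self]
  have pPerpC : ∀ v : V, ∀ l ∈ coSet B L G, B (p v) l = 0 := by
    intro v l hl
    rw [hsymm]
    exact perpCF l hl _ (pFix v)
  -- part (i)
  have part1 : ∀ f : V ≃ₗ[ℚ] V,
      (∀ x y, B (f x) (f y) = B x y) →
      (∀ x ∈ L, f x ∈ L) → (∀ x ∈ L, f.symm x ∈ L) →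
      (∀ v ∈ fixSet L G, f v = v) →
      (∀ x ∈ coSet B L G, f x ∈ coSet B L G) ∧
        (∀ x ∈ coDualSet B L G, f x - x ∈ Submodule.span ℤ (coSet B L G)) := by
    intro f hiso hL1 hL2 hfixf
    have hisos : ∀ a b, B (f.symm a) (f.symm b) = B a b := by
      intro a b
      have h1 := hiso (f.symm a) (f.symm b)
      rw [f.apply_symm_apply, f.apply_symm_apply] at h1
      exact h1.symm
    have hfsymmfix : ∀ v ∈ fixSet L G, f.symm v = v := by
      intro v hv
      conv_lhs => rw [← hfixf v hv]
      exact f.symm_apply_apply v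
    have hCst : ∀ x ∈ coSet B L G, f x ∈ coSet B L G := by
      intro x hx
      refine ⟨hL1 x hx.1, fun w hw => ?_⟩
      have h1 : B (f x) (f w) = B x w := hiso x w
      rw [hfixf w hw] at h1
      rw [h1]
      exact hx.2 w hw
    refine ⟨hCst, ?_⟩
    rintro x ⟨hx1, hx2⟩
    have hmemL : f x - x ∈ L := by
      apply huni
      intro l hl
      have hdiff : f.symm l - l ∈ coSet B L G := by
        refine ⟨L.sub_mem (hL2 l hl) hl, fun w hw => ?_⟩
        have h1 : B (f.symm l) w = B l w := by
          conv_lhs => rw [← hfsymmfix w hw]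
          exact hisos l w
        rw [map_sub, LinearMap.sub_apply, h1, sub_self]
      obtain ⟨n, hn⟩ := hx2 _ hdiff
      refine ⟨n, ?_⟩
      have h2 : B (f x) l = B x (f.symm l) := by
        conv_lhs => rw [← f.apply_symm_apply l]
        exact hiso x (f.symm l)
      calc B (f x - x) l = B (f x) l - B x l := by rw [map_sub, LinearMap.sub_apply]
        _ = B x (f.symm l) - B x l := by rw [h2]
        _ = B x (f.symm l - l) := by rw [map_sub]
        _ = (n : ℚ) := hn
    have hperp : ∀ w ∈ fixSet L G, B (f x - x) w = 0 := by
      intro w hw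
      have h1 : B (f x) w = B x w := by
        conv_lhs => rw [← hfixf w hw]
        exact hiso x w
      rw [map_sub, LinearMap.sub_apply, h1, sub_self]
    exact Submodule.subset_span ⟨hmemL, hperp⟩
  -- extension to L
  have extendL : ∀ φ : V ≃ₗ[ℚ] V,
      (∀ x y, B (φ x) (φ y) = B x y) →
      (∀ v, (∀ l ∈ coSet B L G, B v l = 0) → φ v = v) →
      (∀ x ∈ coDualSet B L G, φ x - x ∈ Submodule.span ℤ (coSet B L G)) →
      ∀ y ∈ L, φ y ∈ L := by
    intro φ _h1 h2 h5 y hy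
    have hqdual : (y - p y) ∈ coDualSet B L G := by
      refine ⟨qspan y, fun l hl => ?_⟩
      obtain ⟨n, hn⟩ := hint y hy l hl.1
      refine ⟨n, ?_⟩
      rw [map_sub, LinearMap.sub_apply, pPerpC y l hl, sub_zero]
      exact hn
    have hs : φ (y - p y) - (y - p y) ∈ Submodule.span ℤ (coSet B L G) := h5 _ hqdual
    have hsL : φ (y - p y) - (y - p y) ∈ L :=
      (Submodule.span_le.mpr (fun l hl => hl.1)) hs
    have hpy : φ (p y) = p y := h2 _ (pPerpC y)
    have key : φ (y - p y) - (y - p y) = φ y - y := by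
      rw [map_sub, hpy]; abel
    rw [key] at hsL
    have h3 := L.add_mem hsL hy
    rwa [sub_add_cancel] at h3
  -- the "full" package for φ satisfying the O^#(L_G) hypotheses
  have hfull : ∀ φ : V ≃ₗ[ℚ] V,
      (∀ x y, B (φ x) (φ y) = B x y) →
      (∀ v, (∀ l ∈ coSet B L G, B v l = 0) → φ v = v) →
      (∀ x ∈ coSet B L G, φ x ∈ coSet B L G) →
      (∀ x ∈ coDualSet B L G, φ x - x ∈ Submodule.span ℤ (coSet B L G)) →
      (∀ y ∈ L, φ y ∈ L) ∧ (∀ y ∈ L, φ.symm y ∈ L) ∧ (∀ v ∈ fixSet L G, φ v = v) := by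
    intro φ h1 h2 h3 h5
    have h1s : ∀ a b, B (φ.symm a) (φ.symm b) = B a b := by
      intro a b
      have hh := h1 (φ.symm a) (φ.symm b)
      rw [φ.apply_symm_apply, φ.apply_symm_apply] at hh
      exact hh.symm
    have h2s : ∀ v, (∀ l ∈ coSet B L G, B v l = 0) → φ.symm v = v := by
      intro v hv
      conv_lhs => rw [← h2 v hv]
      exact φ.symm_apply_apply v
    have h5s : ∀ x ∈ coDualSet B L G, φ.symm x - x ∈ Submodule.span ℤ (coSet B L G) := by
      rintro x ⟨hx1, hx2⟩
      have hsx : φ.symm x ∈ coDualSet B L G := by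
        constructor
        · apply memspanC
          intro w hw
          have hφw : φ w = w := h2 w (fun l hl => by rw [hsymm]; exact perpCF l hl w hw)
          have hw2 : φ.symm w = w := by
            conv_lhs => rw [← hφw]
            exact φ.symm_apply_apply w
          calc B (φ.symm x) w = B (φ.symm x) (φ.symm w) := by rw [hw2]
            _ = B x w := h1s x w
            _ = 0 := spanperpFx x hx1 w hw
        · intro l hl
          obtain ⟨n, hn⟩ := hx2 (φ l) (h3 l hl)
          refine ⟨n, ?_⟩
          have := h1 (φ.symm x) l
          rw [φ.apply_symm_apply] at this
          rw [← this]
          exact hn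
      have hh := h5 _ hsx
      rw [φ.apply_symm_apply] at hh
      have := Submodule.neg_mem _ hh
      rwa [neg_sub] at this
    refine ⟨extendL φ h1 h2 h5, extendL φ.symm h1s h2s h5s, ?_⟩
    intro v hv
    exact h2 v (fun l hl => by rw [hsymm]; exact perpCF l hl v hv.2)
  refine ⟨part1, ?_, ?_⟩
  · -- part (ii)
    intro φ h1 h2 h3 _h4 h5
    obtain ⟨hL1, hL2, hfix⟩ := hfull φ h1 h2 h3 h5
    exact ⟨φ, h1, hL1, hL2, hfix, fun v _ => rfl⟩
  · -- part (iii)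
    constructor
    · intro hsat φ h1 h2 h3 _h4 h5
      obtain ⟨hL1, hL2, hfix⟩ := hfull φ h1 h2 h3 h5
      exact ⟨φ, hsat φ h1 hL1 hL2 hfix, fun v _ => rfl⟩
    · intro hsur f hiso hL1 hL2 hfixf
      have hi := part1 f hiso hL1 hL2 hfixf
      have hisos : ∀ a b, B (f.symm a) (f.symm b) = B a b := by
        intro a b
        have hh := hiso (f.symm a) (f.symm b)
        rw [f.apply_symm_apply, f.apply_symm_apply] at hh
        exact hh.symm
      have hfsymmfix : ∀ v ∈ fixSet L G, f.symm v = v := by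
        intro v hv
        conv_lhs => rw [← hfixf v hv]
        exact f.symm_apply_apply v
      have hisymm := part1 f.symm hisos hL2 (by simpa using hL1) hfsymmfix
      have h2f : ∀ v, (∀ l ∈ coSet B L G, B v l = 0) → f v = v := by
        intro v hv
        have huperp : ∀ l ∈ coSet B L G, B (v - p v) l = 0 := by
          intro l hl
          rw [map_sub, LinearMap.sub_apply, hv l hl, pPerpC v l hl, sub_zero]
        have hu : v - p v = 0 := by
          apply hnondeg
          intro z
          have hzdec : z = p z + (z - p z) := by abel
          have hz1 : B (v - p v) (p z) = 0 := spanperpFx _ (qspan v) (p z) (pFix z)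
          have hz2 : B (v - p v) (z - p z) = 0 := spanker _ huperp _ (qspan z)
          rw [hzdec, map_add, hz1, hz2, add_zero]
        have hvp : v = p v := sub_eq_zero.mp hu
        rw [hvp]
        exact fixAll f hfixf _ (pFix v)
      obtain ⟨g, hgG, hgv⟩ := hsur f hiso h2f hi.1 hisymm.1 hi.2
      have hspan_eq : ∀ z ∈ Submodule.span ℚ (coSet B L G), f z = g z := by
        intro z hz
        have hker : Submodule.span ℚ (coSet B L G) ≤
            LinearMap.ker ((f : V →ₗ[ℚ] V) - (g : V →ₗ[ℚ] V)) := by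
          refine Submodule.span_le.mpr (fun l hl => LinearMap.mem_ker.mpr ?_)
          simp only [LinearMap.sub_apply, LinearEquiv.coe_coe]
          rw [hgv l hl, sub_self]
        have := LinearMap.mem_ker.mp (hker hz)
        simp only [LinearMap.sub_apply, LinearEquiv.coe_coe] at this
        exact sub_eq_zero.mp this
      have hfg : f = g := by
        refine LinearEquiv.ext fun v => ?_
        have h1 : f (p v) = p v := fixAll f hfixf _ (pFix v)
        have h2 : g (p v) = p v := pFix v g hgG
        have h3 : f (v - p v) = g (v - p v) := hspan_eq _ (qspan v)
        calc f v = f (p v + (v - p v)) := by rw [add_sub_cancel]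
          _ = f (p v) + f (v - p v) := map_add f _ _
          _ = g (p v) + g (v - p v) := by rw [h1, h2, h3]
          _ = g (p v + (v - p v)) := (map_add g _ _).symm
          _ = g v := by rw [add_sub_cancel]
      rw [hfg]
      exact hgG
end
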